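/- Let M be an MDP in reachability form with matrices A and T as above, δ_in the Dirac initial distribution, and λ ∈ ℝ^k. Then every scheduler σ satisfies the disjunction ⋁_{i=1}^k Pr^σ(◇G_i) < λ_i if and only if there exist x ∈ ℝ^S and z ∈ ℝ^k with z ≥ 0, A x ≥ T z, and x(s_in) < λᵀ z. -/

import Mathlib

open Finset

structure MDP (S A : Type) [Fintype S] [Fintype A] where
  init : S
  trans : S → A → Option (S → ℝ)
  nonneg' : ∀ s a f, trans s a = some f → ∀ t, 0 ≤ f t
  sum_one' : ∀ s a f, trans s a = some f → ∑ t, f t = 1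
  exists_enabled : ∀ s, ∃ a, (trans s a).isSome

namespace MDP

variable {S A : Type} [Fintype S] [Fintype A]

/-- action `a` is enabled in state `s`. -/
def enabled (M : MDP S A) (s : S) (a : A) : Prop := (M.trans s a).isSome

/-- transition probability (0 if the action is not enabled). -/
noncomputable def prob (M : MDP S A) (s : S) (a : A) (t : S) : ℝ :=
  ((M.trans s a).getD 0) t

/-- A (history-dependent, randomized) scheduler. -/
structure Scheduler (M : MDP S A) where
  choice : List (S × A) → S → A → ℝ
  choice_nonneg : ∀ h s a, 0 ≤ choice h s a
  choice_sum_one : ∀ h s, ∑ a, choice h s a = 1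
  choice_support : ∀ h s a, choice h s a ≠ 0 → M.enabled s a

variable [DecidableEq S]

/-- probability of reaching `G` within `n` steps, from history `h` and current state `s`. -/
noncomputable def reachAux (M : MDP S A) (σ : Scheduler M) (G : Finset S) :
    ℕ → List (S × A) → S → ℝ
  | 0, _, s => if s ∈ G then 1 else 0
  | n + 1, h, s =>
      if s ∈ G then 1
      else ∑ a : A, σ.choice h s a * ∑ t : S, M.prob s a t * reachAux M σ G n (h ++ [(s, a)]) t

/-- probability of eventually reaching `G`, starting in `s`. -/
noncomputable def prReachFrom (M : MDP S A) (σ : Scheduler M) (G : Finset S) (s : S) : ℝ :=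
  ⨆ n : ℕ, reachAux M σ G n [] s

/-- probability of eventually reaching `G` from the initial state. -/
noncomputable def prReach (M : MDP S A) (σ : Scheduler M) (G : Finset S) : ℝ :=
  prReachFrom M σ G M.init

/-- probability of staying in `G` for the first `n` steps. -/
noncomputable def invAux (M : MDP S A) (σ : Scheduler M) (G : Finset S) :
    ℕ → List (S × A) → S → ℝ
  | 0, _, s => if s ∈ G then 1 else 0
  | n + 1, h, s =>
      if s ∈ G then
        ∑ a : A, σ.choice h s a * ∑ t : S, M.prob s a t * invAux M σ G n (h ++ [(s, a)]) t
      else 0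

/-- probability of always remaining in `G`, from the initial state. -/
noncomputable def prInv (M : MDP S A) (σ : Scheduler M) (G : Finset S) : ℝ :=
  ⨅ n : ℕ, invAux M σ G n [] M.init

/-- expected total reward collected in the first `n` steps. -/
noncomputable def expTotal (M : MDP S A) (σ : Scheduler M) (r : S → A → ℝ) :
    ℕ → List (S × A) → S → ℝ
  | 0, _, _ => 0
  | n + 1, h, s =>
      ∑ a : A, σ.choice h s a *
        (r s a + ∑ t : S, M.prob s a t * expTotal M σ r n (h ++ [(s, a)]) t)

/-- expected (liminf) mean payoff under scheduler `σ`. -/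
noncomputable def expMPinf (M : MDP S A) (σ : Scheduler M) (r : S → A → ℝ) : ℝ :=
  Filter.liminf (fun n : ℕ => expTotal M σ r n [] M.init / n) Filter.atTop

/-- expected (limsup) mean payoff under scheduler `σ`. -/
noncomputable def expMPsup (M : MDP S A) (σ : Scheduler M) (r : S → A → ℝ) : ℝ :=
  Filter.limsup (fun n : ℕ => expTotal M σ r n [] M.init / n) Filter.atTop

/-- `M'` (with fresh sink `⊥ = none`) is a subsystem of `M` with state set `S' ∪ {⊥}`. -/
def IsSubsystem (M : MDP S A) (S' : Finset S) (M' : MDP (Option S) A) : Prop :=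
  M.init ∈ S' ∧ M'.init = some M.init ∧
  (∀ a, M'.enabled none a → ∀ t, M'.prob none a t = if t = none then 1 else 0) ∧
  (∀ s ∈ S', ∀ a, (M'.enabled (some s) a ↔ M.enabled s a)) ∧
  (∀ s ∈ S', ∀ t ∈ S', ∀ a,
    M'.prob (some s) a (some t) = M.prob s a t ∨ M'.prob (some s) a (some t) = 0) ∧
  (∀ s ∈ S', ∀ t, t ∉ S' → ∀ a, M'.prob (some s) a (some t) = 0)

/-- `M'` is the subsystem of `M` induced by `S'`: transitions leaving `S'` are
redirected to the absorbing sink `⊥ = none`. -/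
def IsInducedSubsystem (M : MDP S A) (S' : Finset S) (M' : MDP (Option S) A) : Prop :=
  M.init ∈ S' ∧ M'.init = some M.init ∧
  (∀ a, M'.enabled none a → ∀ t, M'.prob none a t = if t = none then 1 else 0) ∧
  (∀ s ∈ S', ∀ a, (M'.enabled (some s) a ↔ M.enabled s a)) ∧
  (∀ s ∈ S', ∀ t ∈ S', ∀ a, M'.prob (some s) a (some t) = M.prob s a t) ∧
  (∀ s ∈ S', ∀ t, t ∉ S' → ∀ a, M'.prob (some s) a (some t) = 0) ∧
  (∀ s ∈ S', ∀ a, M.enabled s a → M'.prob (some s) a none = ∑ t ∈ S'ᶜ, M.prob s a t)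

/-- `C` is an end component of `M`. -/
def IsEC (M : MDP S A) (C : Finset (S × A)) : Prop :=
  C.Nonempty ∧ (∀ p ∈ C, M.enabled p.1 p.2) ∧
  (∀ p ∈ C, ∀ t, 0 < M.prob p.1 p.2 t → t ∈ C.image Prod.fst) ∧
  (∀ s ∈ C.image Prod.fst, ∀ t ∈ C.image Prod.fst,
    Relation.ReflTransGen (fun u v => ∃ a, (u, a) ∈ C ∧ 0 < M.prob u a v) s t)

end MDP

/-- positive boolean combinations of lower-bounded reachability and invariance
predicates; the flag `strict` distinguishes `>` from `≥`. -/
inductive MOProp (S : Type) where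
  | reach (G : Finset S) (lam : ℝ) (strict : Bool)
  | invar (G : Finset S) (lam : ℝ) (strict : Bool)
  | conj (p q : MOProp S)
  | disj (p q : MOProp S)

namespace MDP

variable {S A : Type} [Fintype S] [Fintype A] [DecidableEq S]

/-- satisfaction of a multi-objective property in `M` under `σ`. -/
def Sat (M : MDP S A) (σ : Scheduler M) : MOProp S → Prop
  | .reach G lam strict => if strict then lam < prReach M σ G else lam ≤ prReach M σ G
  | .invar G lam strict => if strict then lam < prInv M σ G else lam ≤ prInv M σ G
  | .conj p q => Sat M σ p ∧ Sat M σ q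
  | .disj p q => Sat M σ p ∨ Sat M σ q

/-- satisfaction of a multi-objective property (over the original state space) in a
subsystem `M'` with sink `⊥ = none`. -/
def SatSub (M' : MDP (Option S) A) (σ : Scheduler M') : MOProp S → Prop
  | .reach G lam strict =>
      if strict then lam < prReach M' σ (G.image some) else lam ≤ prReach M' σ (G.image some)
  | .invar G lam strict =>
      if strict then lam < prInv M' σ (G.image some) else lam ≤ prInv M' σ (G.image some)
  | .conj p q => SatSub M' σ p ∧ SatSub M' σ q
  | .disj p q => SatSub M' σ p ∨ SatSub M' σ q

end MDP

/-!
The constraint `A x ≥ T z` says that `x`, extended to the absorbing set `F` by `∑ᵢ zᵢ [· ∈ Gᵢ]`,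
is superharmonic outside `F`. By induction on the horizon it therefore dominates
`∑ᵢ zᵢ Pr^σ(◇Gᵢ)` under every scheduler `σ`, provided `x ≥ 0` outside `F`; and it is, since
every state reaches `F` with positive probability under some scheduler, whereas a negative
minimum of `x` would only be attained on a set from which `F` is never reached. Hence
`∑ᵢ zᵢ Pr^σ(◇Gᵢ) ≤ x(s_in) < λᵀz`, and `Pr^σ(◇Gᵢ) < λᵢ` for some `i`.

Conversely, if there is no certificate, Farkas' lemma yields `y ≥ 0` with `yᵀA = δ_in` and
`yᵀT ≥ λ`. Such a `y` is a flow from `s_in`, and the memoryless scheduler choosing actions in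
proportion to `y` reaches each `Gᵢ` with probability exactly `(yᵀT)ᵢ`: with `Y s = ∑ₐ y(s, a)` and
`vₙ` the probability of reaching the target within `n` steps, the flow equations give
`vₙ(s_in) = (yᵀT)ᵢ + ∑ₛ Y s vₙ(s) − ∑ₛ Y s vₙ₊₁(s)`, and the last two terms have the same limit.
-/

open Matrix Filter Topology

section Farkas

variable {𝕜 E ι : Type*} [Field 𝕜] [LinearOrder 𝕜] [IsStrictOrderedRing 𝕜]
  [AddCommGroup E] [Module 𝕜 E]

theorem exists_nonneg_sum_smul_eq_or_exists_dual (s : Finset ι) (g : ι → E) (b : E) :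
    (∃ c : ι → 𝕜, 0 ≤ c ∧ ∑ i ∈ s, c i • g i = b) ∨
      ∃ f : Module.Dual 𝕜 E, (∀ i ∈ s, 0 ≤ f (g i)) ∧ f b < 0 := by
  classical
  induction s using Finset.induction_on generalizing g b with
  | empty =>
    by_cases hb : b = 0
    · exact Or.inl ⟨0, le_rfl, by simp [hb]⟩
    obtain ⟨f, hf⟩ := Module.Projective.exists_dual_ne_zero 𝕜 hb
    rcases hf.lt_or_gt with hf | hf
    · exact Or.inr ⟨f, by simp, hf⟩
    · exact Or.inr ⟨-f, by simp, by simpa using hf⟩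
  | insert j s hj ih =>
    have sum_update (c : ι → 𝕜) (β : 𝕜) :
        ∑ i ∈ insert j s, Function.update c j β i • g i = β • g j + ∑ i ∈ s, c i • g i := by
      rw [sum_insert hj, Function.update_self]
      congr 1
      exact sum_congr rfl fun i hi => by
        rw [Function.update_of_ne (ne_of_mem_of_not_mem hi hj)]
    rcases ih g b with ⟨c, hc, hcb⟩ | ⟨f, hf, hfb⟩
    · exact Or.inl ⟨Function.update c j 0, le_update_iff.mpr ⟨le_rfl, fun i _ => hc i⟩,
        by simp [sum_update, hcb]⟩
    by_cases hfj : 0 ≤ f (g j)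
    · exact Or.inr ⟨f, forall_mem_insert _ _ _ |>.mpr ⟨hfj, hf⟩, hfb⟩
    push Not at hfj
    -- the projection along `g j` onto `ker f`; a certificate for the projected problem
    -- either lifts back or composes with `π` to one that vanishes on `g j`
    set π : E →ₗ[𝕜] E := LinearMap.id - ((f (g j))⁻¹ • f).smulRight (g j) with hπ
    have π_apply (v : E) : π v = v - (f v / f (g j)) • g j := by
      simp [hπ, div_eq_inv_mul]
    rcases ih (π ∘ g) (π b) with ⟨c, hc, hcb⟩ | ⟨f', hf', hfb'⟩
    · set β := (f b - ∑ i ∈ s, c i * f (g i)) / f (g j)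
      have hβ : 0 ≤ β := by
        refine div_nonneg_of_nonpos ?_ hfj.le
        have : 0 ≤ ∑ i ∈ s, c i * f (g i) :=
          sum_nonneg fun i hi => mul_nonneg (hc i) (hf i hi)
        linarith
      refine Or.inl ⟨Function.update c j β, le_update_iff.mpr ⟨hβ, fun i _ => hc i⟩, ?_⟩
      simp only [Function.comp_apply, π_apply, smul_sub, sum_sub_distrib, smul_smul,
        ← sum_smul] at hcb
      have hβ' : β = f b / f (g j) - ∑ i ∈ s, c i * (f (g i) / f (g j)) := by
        simp only [β, sub_div, sum_div, mul_div_assoc]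
      rw [sum_update, hβ']
      linear_combination (norm := module) hcb
    · refine Or.inr ⟨f'.comp π, ?_, hfb'⟩
      refine forall_mem_insert _ _ _ |>.mpr ⟨?_, hf'⟩
      simp [π_apply, hfj.ne]

theorem Matrix.exists_nonneg_vecMul_eq_or_exists_mulVec_nonneg {m n : Type*} [Fintype m]
    [Fintype n] (G : Matrix m n 𝕜) (b : n → 𝕜) :
    (∃ c, 0 ≤ c ∧ c ᵥ* G = b) ∨ ∃ u, 0 ≤ G *ᵥ u ∧ b ⬝ᵥ u < 0 := by
  classical
  rcases exists_nonneg_sum_smul_eq_or_exists_dual (𝕜 := 𝕜) univ (fun i => G i) b with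
    ⟨c, hc, hcb⟩ | ⟨f, hf, hfb⟩
  · exact Or.inl ⟨c, hc, by rwa [Matrix.vecMul_eq_sum]⟩
  · have hfu (v : n → 𝕜) : f v = v ⬝ᵥ fun j => f fun k => if j = k then 1 else 0 := by
      simp [LinearMap.pi_apply_eq_sum_univ f v, dotProduct]
    exact Or.inr ⟨_, fun i => hfu (G i) ▸ hf i (mem_univ i), hfu b ▸ hfb⟩

end Farkas

namespace MDP

variable {S A : Type} [Fintype S] [Fintype A] {M : MDP S A}

lemma prob_nonneg (s : S) (a : A) (t : S) : 0 ≤ M.prob s a t := by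
  unfold MDP.prob
  cases h : M.trans s a with
  | none => simp
  | some f => simpa using M.nonneg' s a f h t

lemma sum_prob_eq_one {s : S} {a : A} (h : M.enabled s a) : ∑ t, M.prob s a t = 1 := by
  obtain ⟨f, hf⟩ := Option.isSome_iff_exists.mp h
  simpa [MDP.prob, hf] using M.sum_one' s a f hf

lemma Scheduler.sum_choice_mul_le (σ : Scheduler M) {h : List (S × A)} {s : S} {φ : A → ℝ}
    {x : ℝ} (hφ : ∀ a, M.enabled s a → φ a ≤ x) : ∑ a, σ.choice h s a * φ a ≤ x := by
  calc ∑ a, σ.choice h s a * φ a ≤ ∑ a, σ.choice h s a * x := by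
        refine sum_le_sum fun a _ => ?_
        rcases eq_or_ne (σ.choice h s a) 0 with h0 | h0
        · simp [h0]
        · exact mul_le_mul_of_nonneg_left (hφ a (σ.choice_support h s a h0))
            (σ.choice_nonneg h s a)
    _ = x := by rw [← sum_mul, σ.choice_sum_one, one_mul]

open Classical in
-- `y (s, a)` is read as the expected number of times `a` is chosen in `s`
noncomputable def Scheduler.ofOccupation (y : S × A → ℝ) (hy : 0 ≤ y)
    (hen : ∀ p, y p ≠ 0 → M.enabled p.1 p.2) : Scheduler M where
  choice _ s a :=
    if ∑ b, y (s, b) = 0 then if a = (M.exists_enabled s).choose then 1 else 0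
    else y (s, a) / ∑ b, y (s, b)
  choice_nonneg _ s a := by
    split_ifs
    exacts [zero_le_one, le_rfl, div_nonneg (hy _) (sum_nonneg fun b _ => hy _)]
  choice_sum_one _ s := by
    split_ifs with hY
    · simp
    · rw [← sum_div, div_self hY]
  choice_support _ s a := by
    split_ifs with hY ha
    · exact fun _ => ha ▸ (M.exists_enabled s).choose_spec
    · exact fun h => absurd rfl h
    · exact fun h => hen (s, a) (left_ne_zero_of_mul h)

lemma Scheduler.ofOccupation_choice_mul (y : S × A → ℝ) (hy : 0 ≤ y)
    (hen : ∀ p, y p ≠ 0 → M.enabled p.1 p.2) (h : List (S × A)) (s : S) (a : A) :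
    (ofOccupation y hy hen).choice h s a * ∑ b, y (s, b) = y (s, a) := by
  by_cases hY : ∑ b, y (s, b) = 0
  · rw [hY, mul_zero, (sum_eq_zero_iff_of_nonneg fun b _ => hy (s, b)).mp hY a (mem_univ a)]
  · simp [ofOccupation, hY]

variable [DecidableEq S]

lemma prob_eq_zero_of_prob_self_eq_one {s t : S} {a : A} (ha : M.enabled s a)
    (hs : M.prob s a s = 1) (ht : t ≠ s) : M.prob s a t = 0 := by
  have hrest : ∑ u ∈ univ.erase s, M.prob s a u = 0 := by
    linarith [sum_erase_add _ (M.prob s a) (mem_univ s), sum_prob_eq_one ha]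
  exact (sum_eq_zero_iff_of_nonneg fun u _ => prob_nonneg s a u).mp hrest t
    (mem_erase.mpr ⟨ht, mem_univ t⟩)

section Reach

variable (σ : Scheduler M)

lemma reachAux_of_mem {G : Finset S} {s : S} (hs : s ∈ G) (n : ℕ) (h : List (S × A)) :
    reachAux M σ G n h s = 1 := by
  cases n <;> simp [reachAux, hs]

lemma reachAux_nonneg (G : Finset S) (n : ℕ) (h : List (S × A)) (s : S) :
    0 ≤ reachAux M σ G n h s := by
  induction n generalizing h s with
  | zero => simp only [reachAux]; positivity
  | succ n ih =>
    simp only [reachAux]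
    split
    · exact zero_le_one
    · exact sum_nonneg fun a _ => mul_nonneg (σ.choice_nonneg h s a)
        (sum_nonneg fun t _ => mul_nonneg (prob_nonneg s a t) (ih _ t))

lemma reachAux_le_one (G : Finset S) (n : ℕ) (h : List (S × A)) (s : S) :
    reachAux M σ G n h s ≤ 1 := by
  induction n generalizing h s with
  | zero => simp only [reachAux]; split <;> norm_num
  | succ n ih =>
    simp only [reachAux]
    split
    · exact le_rfl
    · refine σ.sum_choice_mul_le fun a ha => ?_
      calc ∑ t, M.prob s a t * reachAux M σ G n (h ++ [(s, a)]) t ≤ ∑ t, M.prob s a t :=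
            sum_le_sum fun t _ => mul_le_of_le_one_right (prob_nonneg s a t) (ih _ t)
        _ = 1 := sum_prob_eq_one ha

lemma reachAux_le_reachAux_succ (G : Finset S) (n : ℕ) (h : List (S × A)) (s : S) :
    reachAux M σ G n h s ≤ reachAux M σ G (n + 1) h s := by
  induction n generalizing h s with
  | zero =>
    by_cases hs : s ∈ G
    · simp [reachAux, hs]
    · simpa [reachAux, hs] using reachAux_nonneg σ G 1 h s
  | succ n ih =>
    rw [reachAux, reachAux]
    split
    · exact le_rfl
    · gcongr with a _ t _
      · exact σ.choice_nonneg h s a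
      · exact prob_nonneg s a t
      · exact ih _ t

lemma tendsto_reachAux (G : Finset S) (s : S) :
    Tendsto (fun n => reachAux M σ G n [] s) atTop (𝓝 (prReachFrom M σ G s)) :=
  tendsto_atTop_ciSup (monotone_nat_of_le_succ fun n => reachAux_le_reachAux_succ σ G n [] s)
    ⟨1, Set.forall_mem_range.mpr fun n => reachAux_le_one σ G n [] s⟩

lemma reachAux_of_absorbing {s : S} (habs : ∀ a, M.enabled s a → M.prob s a s = 1)
    (G : Finset S) (n : ℕ) (h : List (S × A)) :
    reachAux M σ G n h s = if s ∈ G then 1 else 0 := by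
  induction n generalizing h with
  | zero => rfl
  | succ n ih =>
    by_cases hsG : s ∈ G
    · simp [reachAux, hsG]
    rw [reachAux, if_neg hsG, if_neg hsG]
    refine sum_eq_zero fun a _ => ?_
    rcases eq_or_ne (σ.choice h s a) 0 with h0 | h0
    · rw [h0, zero_mul]
    have ha := σ.choice_support h s a h0
    rw [sum_eq_single_of_mem s (mem_univ s) fun t _ ht => by
      rw [prob_eq_zero_of_prob_self_eq_one ha (habs a ha) ht, zero_mul]]
    rw [ih, if_neg hsG, mul_zero, mul_zero]

lemma reachAux_eq_of_memoryless (hσ : ∀ h h', σ.choice h = σ.choice h') (G : Finset S)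
    (n : ℕ) (h h' : List (S × A)) (s : S) :
    reachAux M σ G n h s = reachAux M σ G n h' s := by
  induction n generalizing h h' s with
  | zero => rfl
  | succ n ih =>
    rw [reachAux, reachAux, hσ h h']
    congr 1
    exact sum_congr rfl fun a _ => by simp only [ih (h ++ [(s, a)]) (h' ++ [(s, a)])]

lemma sum_mul_reachAux_le_of_superharmonic {ι : Type*} [Fintype ι] {F : Finset S}
    {G : ι → Finset S} (hG : ∀ i, G i ⊆ F) (z : ι → ℝ) {x : S → ℝ}
    (hx : ∀ s ∉ F, ∀ a, M.enabled s a → ∑ t, M.prob s a t * x t ≤ x s)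
    (hx0 : ∀ s ∉ F, 0 ≤ x s)
    (hxF : ∀ n h, ∀ s ∈ F, ∑ i, z i * reachAux M σ (G i) n h s ≤ x s)
    (n : ℕ) (h : List (S × A)) (s : S) :
    ∑ i, z i * reachAux M σ (G i) n h s ≤ x s := by
  by_cases hs : s ∈ F
  · exact hxF n h s hs
  have hsG : ∀ i, s ∉ G i := fun i hi => hs (hG i hi)
  induction n generalizing h s with
  | zero => simpa [reachAux, hsG] using hx0 s hs
  | succ n ih =>
    calc ∑ i, z i * reachAux M σ (G i) (n + 1) h s
        = ∑ a, σ.choice h s a * ∑ t, M.prob s a t *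
            ∑ i, z i * reachAux M σ (G i) n (h ++ [(s, a)]) t := by
          simp only [reachAux, hsG, if_false, mul_sum]
          rw [sum_comm]
          refine sum_congr rfl fun a _ => ?_
          rw [sum_comm]
          exact sum_congr rfl fun t _ => sum_congr rfl fun i _ => by ring
      _ ≤ x s := σ.sum_choice_mul_le fun a ha => le_trans (sum_le_sum fun t _ => by
          refine mul_le_mul_of_nonneg_left ?_ (prob_nonneg s a t)
          by_cases ht : t ∈ F
          · exact hxF n _ t ht
          · exact ih _ t ht fun i hi => ht (hG i hi)) (hx s hs a ha)

end Reach

lemma nonneg_of_superharmonic {F : Finset S}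
    (hform : ∀ s, ∃ σ : Scheduler M, 0 < prReachFrom M σ F s) {x : S → ℝ}
    (hx : ∀ s ∉ F, ∀ a, M.enabled s a → ∑ t ∈ Fᶜ, M.prob s a t * x t ≤ x s)
    {s : S} (hs : s ∉ F) : 0 ≤ x s := by
  obtain ⟨s₀, hs₀, hmin⟩ := Fᶜ.exists_min_image x ⟨s, mem_compl.mpr hs⟩
  rw [mem_compl] at hs₀
  by_contra! hneg
  set m := x s₀
  have hm : m < 0 := (hmin s (mem_compl.mpr hs)).trans_lt hneg
  obtain ⟨σ, hσ⟩ := hform s₀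
  -- `x - m`, extended by `-m` on `F`, is superharmonic and dominates `-m` times the
  -- probability of reaching `F`, which therefore vanishes at the minimum `s₀`
  have hdom := sum_mul_reachAux_le_of_superharmonic σ (ι := Unit) (G := fun _ => F)
    (fun _ => subset_rfl) (fun _ => -m) (x := fun t => (if t ∈ Fᶜ then x t else 0) - m) ?_ ?_ ?_
  · have hzero (n : ℕ) : reachAux M σ F n [] s₀ ≤ 0 := by
      have := hdom n [] s₀
      simp only [univ_unique, sum_singleton, mem_compl, if_pos hs₀] at this
      nlinarith
    exact hσ.not_ge (ciSup_le hzero)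
  · intro t ht a ha
    simp only [mul_sub, mul_ite, mul_zero, sum_sub_distrib, sum_ite_mem, univ_inter, ← sum_mul,
      sum_prob_eq_one ha, one_mul, if_pos (mem_compl.mpr ht)]
    linarith [hx t ht a ha]
  · intro t ht
    simpa [ht] using hmin t (mem_compl.mpr ht)
  · intro n h t ht
    simp [reachAux_of_mem σ ht, ht]

theorem exists_prReach_lt_of_certificate {F : Finset S}
    (habs : ∀ s ∈ F, ∀ a, M.enabled s a → M.prob s a s = 1)
    (hform : ∀ s, ∃ σ : Scheduler M, 0 < prReachFrom M σ F s) (hinit : M.init ∉ F)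
    {ι : Type*} [Fintype ι] {G : ι → Finset S} (hG : ∀ i, G i ⊆ F) {lam : ι → ℝ}
    {x : S → ℝ} {z : ι → ℝ} (hz : ∀ i, 0 ≤ z i)
    (hxz : ∀ p : S × A, p.1 ∉ F → M.enabled p.1 p.2 →
      ∑ i, (∑ t ∈ G i, M.prob p.1 p.2 t) * z i ≤
        ∑ s ∈ Fᶜ, ((if p.1 = s then (1 : ℝ) else 0) - M.prob p.1 p.2 s) * x s)
    (hlt : x M.init < ∑ i, lam i * z i) (σ : Scheduler M) :
    ∃ i, prReach M σ (G i) < lam i := by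
  have hsuper (s : S) (hs : s ∉ F) (a : A) (ha : M.enabled s a) :
      ∑ i, z i * ∑ t ∈ G i, M.prob s a t + ∑ t ∈ Fᶜ, M.prob s a t * x t ≤ x s := by
    have := hxz (s, a) hs ha
    simp only [sub_mul, ite_mul, one_mul, zero_mul, sum_sub_distrib, sum_ite_eq, mem_compl,
      if_pos hs] at this
    simp only [mul_comm (z _)]
    linarith
  have hx0 (s : S) (hs : s ∉ F) : 0 ≤ x s := by
    refine nonneg_of_superharmonic hform (fun t ht a ha => ?_) hs
    have : 0 ≤ ∑ i, z i * ∑ u ∈ G i, M.prob t a u :=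
      sum_nonneg fun i _ => mul_nonneg (hz i) (sum_nonneg fun u _ => prob_nonneg t a u)
    linarith [hsuper t ht a ha]
  have notMem_G {t : S} (ht : t ∉ F) (i : ι) : t ∉ G i := fun h => ht (hG i h)
  have hbound (n : ℕ) : ∑ i, z i * reachAux M σ (G i) n [] M.init ≤ x M.init := by
    -- `x` extended by the weighted target indicator on `F` is superharmonic
    have := sum_mul_reachAux_le_of_superharmonic σ hG z (n := n) (h := []) (s := M.init)
      (x := fun t => ∑ i, z i * (if t ∈ G i then 1 else 0) + if t ∈ Fᶜ then x t else 0)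
      ?_ ?_ ?_
    · simpa [hinit, notMem_G hinit] using this
    · intro t ht a ha
      calc ∑ u, M.prob t a u *
            (∑ i, z i * (if u ∈ G i then 1 else 0) + if u ∈ Fᶜ then x u else 0)
          = ∑ i, z i * ∑ u ∈ G i, M.prob t a u + ∑ u ∈ Fᶜ, M.prob t a u * x u := by
            simp only [mul_add, sum_add_distrib, mul_sum, mul_ite, mul_one, mul_zero]
            rw [sum_comm]
            simp only [sum_ite_mem, univ_inter, ← sum_mul, mul_comm (z _)]
        _ ≤ _ := hsuper t ht a ha
        _ = _ := by simp [notMem_G ht, ht]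
    · intro t ht
      simpa [ht, notMem_G ht] using hx0 t ht
    · intro n h t ht
      simp [reachAux_of_absorbing σ (habs t ht), ht]
  have hlim : ∑ i, z i * prReach M σ (G i) ≤ x M.init :=
    le_of_tendsto' (tendsto_finsetSum _ fun i _ =>
      (tendsto_reachAux σ (G i) M.init).const_mul (z i)) hbound
  obtain ⟨i, -, hi⟩ := exists_lt_of_sum_lt <|
    hlim.trans_lt (hlt.trans_eq (sum_congr rfl fun i _ => mul_comm _ _))
  exact ⟨i, lt_of_mul_lt_mul_left hi (hz i)⟩

lemma sum_mul_reachAux_succ_of_flow {F : Finset S}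
    (habs : ∀ s ∈ F, ∀ a, M.enabled s a → M.prob s a s = 1) (hinit : M.init ∉ F)
    {y : S × A → ℝ} (hyF : ∀ s ∈ F, ∀ a, y (s, a) = 0)
    (hflow : ∀ t ∉ F,
      ∑ a, y (t, a) = (if t = M.init then 1 else 0) + ∑ p, y p * M.prob p.1 p.2 t)
    {σ : Scheduler M} (hσ : ∀ h h', σ.choice h = σ.choice h')
    (hσy : ∀ s a, σ.choice [] s a * ∑ b, y (s, b) = y (s, a)) {G : Finset S} (hG : G ⊆ F)
    (n : ℕ) :
    ∑ s, (∑ a, y (s, a)) * reachAux M σ G (n + 1) [] s =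
      ∑ p, y p * ∑ t ∈ G, M.prob p.1 p.2 t +
        ∑ s, (∑ a, y (s, a)) * reachAux M σ G n [] s - reachAux M σ G n [] M.init := by
  set v := fun n t => reachAux M σ G n [] t
  set Y := fun s => ∑ a, y (s, a)
  have hstep (s : S) : Y s * v (n + 1) s = ∑ a, y (s, a) * ∑ t, M.prob s a t * v n t := by
    by_cases hs : s ∈ F
    · simp [Y, hyF s hs]
    simp only [v, reachAux, if_neg fun h => hs (hG h), mul_sum]
    refine sum_congr rfl fun a _ => ?_
    rw [← hσy s a]
    refine sum_congr rfl fun t _ => ?_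
    rw [reachAux_eq_of_memoryless σ hσ G n _ []]
    ring
  have hpoint (t : S) : (∑ p, y p * M.prob p.1 p.2 t) * v n t =
      (∑ p, y p * M.prob p.1 p.2 t) * (if t ∈ G then 1 else 0) +
        (Y t - if t = M.init then 1 else 0) * v n t := by
    by_cases ht : t ∈ F
    · simp [v, Y, reachAux_of_absorbing σ (habs t ht), hyF t ht, ne_of_mem_of_not_mem ht hinit]
    · rw [show Y t = _ from hflow t ht, if_neg fun h => ht (hG h)]
      ring
  calc ∑ s, Y s * v (n + 1) s
      = ∑ p : S × A, ∑ t, y p * M.prob p.1 p.2 t * v n t := by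
        simp only [hstep, mul_sum, Fintype.sum_prod_type, mul_assoc]
    _ = ∑ t, (∑ p, y p * M.prob p.1 p.2 t) * v n t := by
        simp only [sum_mul]
        exact sum_comm
    _ = _ := by
        simp only [hpoint, sum_add_distrib, sub_mul, sum_sub_distrib, ite_mul, one_mul,
          zero_mul, sum_ite_eq', mem_univ, if_true, mul_ite, mul_one, mul_zero, sum_ite_mem,
          univ_inter, mul_sum]
        rw [sum_comm, add_sub_assoc]

theorem prReach_eq_of_flow {F : Finset S}
    (habs : ∀ s ∈ F, ∀ a, M.enabled s a → M.prob s a s = 1) (hinit : M.init ∉ F)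
    {y : S × A → ℝ} (hyF : ∀ s ∈ F, ∀ a, y (s, a) = 0)
    (hflow : ∀ t ∉ F,
      ∑ a, y (t, a) = (if t = M.init then 1 else 0) + ∑ p, y p * M.prob p.1 p.2 t)
    {σ : Scheduler M} (hσ : ∀ h h', σ.choice h = σ.choice h')
    (hσy : ∀ s a, σ.choice [] s a * ∑ b, y (s, b) = y (s, a)) {G : Finset S} (hG : G ⊆ F) :
    prReach M σ G = ∑ p, y p * ∑ t ∈ G, M.prob p.1 p.2 t := by
  set c := ∑ p, y p * ∑ t ∈ G, M.prob p.1 p.2 t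
  set D := fun n => ∑ s, (∑ a, y (s, a)) * reachAux M σ G n [] s
  set L := ∑ s, (∑ a, y (s, a)) * prReachFrom M σ G s
  have hlim : Tendsto D atTop (𝓝 L) :=
    tendsto_finsetSum _ fun s _ => (tendsto_reachAux σ G s).const_mul _
  have hconv : Tendsto (fun n => reachAux M σ G n [] M.init) atTop (𝓝 (c + L - L)) :=
    ((hlim.const_add c).sub (hlim.comp (tendsto_add_atTop_nat 1))).congr fun n => by
      simp only [Function.comp_apply, D,
        sum_mul_reachAux_succ_of_flow habs hinit hyF hflow hσ hσy hG n]
      ring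
  rw [add_sub_cancel_right] at hconv
  exact tendsto_nhds_unique (tendsto_reachAux σ G M.init) hconv

open Classical in
/-- The matrices `A` and `T` of the reachability form, restricted to the rows `(s, a)` with
`s ∉ F` and `a` enabled and to the columns `s' ∉ F`; all other entries are `0`. -/
noncomputable def reachMatrixA (M : MDP S A) (F : Finset S) : Matrix (S × A) S ℝ :=
  fun p s => if p.1 ∉ F ∧ M.enabled p.1 p.2 ∧ s ∈ Fᶜ then
    (if p.1 = s then 1 else 0) - M.prob p.1 p.2 s else 0

open Classical in
noncomputable def reachMatrixT {ι : Type*} (M : MDP S A) (F : Finset S) (G : ι → Finset S) :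
    Matrix (S × A) ι ℝ :=
  fun p i => if p.1 ∉ F ∧ M.enabled p.1 p.2 then ∑ t ∈ G i, M.prob p.1 p.2 t else 0

lemma reachMatrixT_mulVec_le_iff {ι : Type*} [Fintype ι] {F : Finset S} {G : ι → Finset S}
    {x : S → ℝ} {z : ι → ℝ} :
    reachMatrixT M F G *ᵥ z ≤ reachMatrixA M F *ᵥ x ↔
      ∀ p : S × A, p.1 ∉ F → M.enabled p.1 p.2 →
        ∑ i, (∑ t ∈ G i, M.prob p.1 p.2 t) * z i ≤
          ∑ s ∈ Fᶜ, ((if p.1 = s then (1 : ℝ) else 0) - M.prob p.1 p.2 s) * x s := by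
  refine forall_congr' fun p => ?_
  simp only [Matrix.mulVec, dotProduct, reachMatrixA, reachMatrixT]
  by_cases hp : p.1 ∉ F ∧ M.enabled p.1 p.2
  · simp only [hp, not_false_eq_true, true_and, if_true, ite_mul, zero_mul, sum_ite_mem,
      univ_inter, forall_const]
  · have hp' : ∀ s, ¬(p.1 ∉ F ∧ M.enabled p.1 p.2 ∧ s ∈ Fᶜ) := fun s h => hp ⟨h.1, h.2.1⟩
    simp only [if_neg hp, if_neg (hp' _), zero_mul, sum_const_zero]
    exact iff_of_true le_rfl fun h1 h2 => absurd ⟨h1, h2⟩ hp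

lemma exists_scheduler_prReach_eq_vecMul {F : Finset S}
    (habs : ∀ s ∈ F, ∀ a, M.enabled s a → M.prob s a s = 1) (hinit : M.init ∉ F)
    {ι : Type*} {G : ι → Finset S} (hG : ∀ i, G i ⊆ F) {y : S × A → ℝ} (hy : 0 ≤ y)
    (hA : y ᵥ* reachMatrixA M F = Pi.single M.init 1) :
    ∃ σ : Scheduler M, ∀ i, prReach M σ (G i) = (y ᵥ* reachMatrixT M F G) i := by
  classical
  set y' : S × A → ℝ := fun p => if p.1 ∉ F ∧ M.enabled p.1 p.2 then y p else 0
  have hy' : 0 ≤ y' := fun p => by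
    dsimp only [y']
    split_ifs
    exacts [hy p, le_rfl]
  have hsupp (p : S × A) (hp : y' p ≠ 0) : p.1 ∉ F ∧ M.enabled p.1 p.2 := by
    by_contra h
    simp [y', h] at hp
  have hflow (t : S) (ht : t ∉ F) :
      ∑ a, y' (t, a) = (if t = M.init then 1 else 0) + ∑ p, y' p * M.prob p.1 p.2 t := by
    have hdiff : ∑ p, y' p * ((if p.1 = t then 1 else 0) - M.prob p.1 p.2 t) =
        if t = M.init then 1 else 0 := by
      rw [← Pi.single_apply, ← hA]
      refine sum_congr rfl fun p _ => ?_
      by_cases hp : p.1 ∉ F ∧ M.enabled p.1 p.2 <;> simp [y', reachMatrixA, hp, ht]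
    have hout : ∑ p, y' p * (if p.1 = t then 1 else 0) = ∑ a, y' (t, a) := by
      rw [Fintype.sum_prod_type, sum_eq_single t (fun s _ hs => by simp [hs]) (by simp)]
      simp
    simp only [mul_sub, sum_sub_distrib, hout] at hdiff
    linarith
  have hyF (s : S) (hs : s ∈ F) (a : A) : y' (s, a) = 0 := by simp [y', hs]
  refine ⟨Scheduler.ofOccupation y' hy' fun p hp => (hsupp p hp).2, fun i =>
    (prReach_eq_of_flow habs hinit hyF hflow (fun _ _ => rfl)
      (Scheduler.ofOccupation_choice_mul _ _ _ []) (hG i)).trans ?_⟩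
  refine sum_congr rfl fun p _ => ?_
  by_cases hp : p.1 ∉ F ∧ M.enabled p.1 p.2 <;> simp [y', reachMatrixT, hp]

theorem exists_certificate_of_forall_exists_prReach_lt {F : Finset S}
    (habs : ∀ s ∈ F, ∀ a, M.enabled s a → M.prob s a s = 1) (hinit : M.init ∉ F)
    {ι : Type*} [Fintype ι] {G : ι → Finset S} (hG : ∀ i, G i ⊆ F) {lam : ι → ℝ}
    (h : ∀ σ : Scheduler M, ∃ i, prReach M σ (G i) < lam i) :
    ∃ (x : S → ℝ) (z : ι → ℝ), 0 ≤ z ∧ reachMatrixT M F G *ᵥ z ≤ reachMatrixA M F *ᵥ x ∧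
      x M.init < lam ⬝ᵥ z := by
  classical
  by_contra hno
  rcases exists_nonneg_vecMul_eq_or_exists_mulVec_nonneg
      (fromBlocks (reachMatrixA M F) (-reachMatrixT M F G) 0 (1 : Matrix ι ι ℝ))
      (Sum.elim (Pi.single M.init 1) (-lam)) with ⟨c, hc, hcb⟩ | ⟨u, hu, hub⟩
  · rw [vecMul_fromBlocks] at hcb
    have hA : (c ∘ Sum.inl) ᵥ* reachMatrixA M F = Pi.single M.init 1 :=
      funext fun t => by simpa using congrFun hcb (Sum.inl t)
    obtain ⟨σ, hσ⟩ := exists_scheduler_prReach_eq_vecMul (y := c ∘ Sum.inl) habs hinit hG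
      (fun p => hc _) hA
    obtain ⟨i, hi⟩ := h σ
    have hT := congrFun hcb (Sum.inr i)
    simp only [Sum.elim_inr, Pi.add_apply, vecMul_neg, vecMul_one, Function.comp_apply,
      Pi.neg_apply] at hT
    linarith [hσ i, show (0 : ℝ) ≤ c (Sum.inr i) from hc _]
  · rw [fromBlocks_mulVec] at hu
    rw [← Sum.elim_comp_inl_inr u, sumElim_dotProduct_sumElim, single_dotProduct] at hub
    refine hno ⟨u ∘ Sum.inl, u ∘ Sum.inr, fun i => by simpa using hu (Sum.inr i),
      fun p => ?_, ?_⟩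
    · have := hu (Sum.inl p)
      simp only [Sum.elim_inl, Pi.add_apply, neg_mulVec, Pi.neg_apply, Pi.zero_apply] at this
      linarith
    simp only [neg_dotProduct, one_mul] at hub
    linarith

end MDP

/-- Farkas certificates for universally quantified disjunctive reachability queries with
strict upper bounds: every scheduler satisfies `⋁ᵢ Pr^σ(◇Gᵢ) < λᵢ` iff there are
`x ∈ ℝ^S` and `z ≥ 0` with `A x ≥ T z` and `x(s_in) < λᵀ z`. -/
theorem forall_disj_reach_certificates_strict {S A : Type} [Fintype S] [Fintype A]
    [DecidableEq S] (M : MDP S A) (F : Finset S)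
    (habs : ∀ s ∈ F, ∀ a, M.enabled s a → M.prob s a s = 1)
    (hform : ∀ s, ∃ σ : MDP.Scheduler M, 0 < MDP.prReachFrom M σ F s)
    (hinit : M.init ∉ F)
    {k : ℕ} (G : Fin k → Finset S) (hG : ∀ i, G i ⊆ F) (lam : Fin k → ℝ) :
    (∀ σ : MDP.Scheduler M, ∃ i, MDP.prReach M σ (G i) < lam i) ↔
      ∃ (x : S → ℝ) (z : Fin k → ℝ),
        (∀ i, 0 ≤ z i) ∧
        (∀ p : S × A, p.1 ∉ F → M.enabled p.1 p.2 →
          ∑ i, (∑ t ∈ G i, M.prob p.1 p.2 t) * z i ≤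
            ∑ s ∈ Fᶜ, ((if p.1 = s then (1 : ℝ) else 0) - M.prob p.1 p.2 s) * x s) ∧
        x M.init < ∑ i, lam i * z i := by
  constructor
  · intro h
    obtain ⟨x, z, hz, hxz, hlt⟩ :=
      MDP.exists_certificate_of_forall_exists_prReach_lt habs hinit hG h
    exact ⟨x, z, hz, MDP.reachMatrixT_mulVec_le_iff.mp hxz, hlt⟩
  · rintro ⟨x, z, hz, hxz, hlt⟩ σ
    exact MDP.exists_prReach_lt_of_certificate habs hform hinit hG hz hxz hlt σ
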